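/- arXiv:2511.01072 — 3 statements merged into one kernel-verified Lean document; each statement's English description precedes it below -/
import Mathlib

section
/- Let M₁ ∈ GL₄(ℚ) be the cyclic permutation matrix sending the standard basis vectors e₁ ↦ e₄ ↦ e₃ ↦ e₂ ↦ e₁ (i.e., the matrix with rows (0,1,0,0), (0,0,1,0), (0,0,0,1), (1,0,0,0)). Then every 2-dimensional ℚ-vector subspace of ℚ⁴ invariant under M₁ is equal either to span{(0,1,0,1), (1,0,1,0)} or to span{(0,−1,0,1), (1,0,−1,0)}. -/
/-!
`M₁⁴ = 1` and `X⁴ - 1 = (X² - 1)(X² + 1)`. An invariant plane `W` not contained in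
`ker (M₁² - 1)` contains a vector `u = (M₁² - 1) w ≠ 0` with `M₁² u = -u`; as `-1` is not a square
in `ℚ`, `u` and `M₁ u` are independent, so they span `W` and `W ≤ ker (M₁² + 1)`. The two kernels
are the two planes of the statement.
-/

/-- The cyclic permutation matrix `M₁` with rows `(0,1,0,0), (0,0,1,0), (0,0,0,1), (1,0,0,0)`. -/
def M₁ : Matrix (Fin 4) (Fin 4) ℚ :=
  !![0, 1, 0, 0; 0, 0, 1, 0; 0, 0, 0, 1; 1, 0, 0, 0]

open Module

lemma Submodule.eq_span_pair_of_le {K V : Type*} [Field K] [AddCommGroup V] [Module K V]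
    {W : Submodule K V} {a b : V} (hdim : finrank K W = 2) (hle : W ≤ span K {a, b}) :
    W = span K {a, b} := by
  rw [← Matrix.range_cons_cons_empty a b ![]] at hle ⊢
  have : FiniteDimensional K (span K (Set.range ![a, b])) := .span_of_finite K (Set.finite_range _)
  exact eq_of_le_of_finrank_le hle (hdim ▸ finrank_range_le_card _)

namespace Module.End

variable {K V : Type*} [Field K] [AddCommGroup V] [Module K V] (f : Module.End K V)

lemma linearIndependent_pair_of_apply_apply_eq_neg (hK : ¬IsSquare (-1 : K)) {u : V}
    (hu : u ≠ 0) (hfu : f (f u) = -u) : LinearIndependent K ![u, f u] := by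
  refine (LinearIndependent.pair_iff' hu).mpr fun c hc => hK ⟨c, ?_⟩
  have : (c * c) • u = (-1 : K) • u := by
    rw [mul_smul, hc, ← map_smul, hc, hfu, neg_one_smul]
  exact (smul_left_injective K hu this).symm

lemma le_ker_sq_sub_one_or_le_ker_sq_add_one (hK : ¬IsSquare (-1 : K)) (hf : f ^ 4 = 1)
    {W : Submodule K V} (hW : ∀ v ∈ W, f v ∈ W) (hdim : finrank K W = 2) :
    W ≤ LinearMap.ker (f ^ 2 - 1) ∨ W ≤ LinearMap.ker (f ^ 2 + 1) := by
  refine or_iff_not_imp_left.mpr fun hP => ?_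
  obtain ⟨w, hw, hw'⟩ := SetLike.not_le_iff_exists.mp hP
  set u := (f ^ 2 - 1 : Module.End K V) w
  have hu0 : u ≠ 0 := hw'
  have huW : u ∈ W := by
    simpa [u, pow_two] using W.sub_mem (hW _ (hW _ hw)) hw
  have hfu : f (f u) = -u := by
    have hw4 : f (f (f (f w))) = w := by
      simpa [pow_succ] using LinearMap.congr_fun hf w
    simp [u, pow_two, hw4]
  have hspan : Submodule.span K (Set.range ![u, f u]) = W := by
    have : FiniteDimensional K W := Module.finite_of_finrank_pos (by omega)
    refine Submodule.eq_of_le_of_finrank_eq ?_ ?_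
    · simp [Submodule.span_le, Matrix.range_cons, Set.insert_subset_iff, huW, hW u huW]
    · rw [finrank_span_eq_card (f.linearIndependent_pair_of_apply_apply_eq_neg hK hu0 hfu),
        hdim, Fintype.card_fin]
  rw [← hspan]
  simp [Submodule.span_le, Matrix.range_cons, Set.insert_subset_iff, pow_two, hfu]

end Module.End

lemma toLin'_M₁_apply (v : Fin 4 → ℚ) : Matrix.toLin' M₁ v = ![v 1, v 2, v 3, v 0] := by
  ext i; fin_cases i <;> simp [M₁, Matrix.mulVec, dotProduct, Fin.sum_univ_four]

lemma toLin'_M₁_sq_apply (v : Fin 4 → ℚ) :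
    (Matrix.toLin' M₁ ^ 2) v = ![v 2, v 3, v 0, v 1] := by
  simp only [pow_two, Module.End.mul_apply, toLin'_M₁_apply]
  ext i; fin_cases i <;> rfl

lemma toLin'_M₁_pow_four : Matrix.toLin' M₁ ^ 4 = 1 := by
  refine LinearMap.ext fun v => ?_
  show (Matrix.toLin' M₁ ^ (2 + 2)) v = v
  rw [pow_add, Module.End.mul_apply, toLin'_M₁_sq_apply, toLin'_M₁_sq_apply]
  ext i; fin_cases i <;> rfl

lemma ker_toLin'_M₁_sq_sub_one_le :
    LinearMap.ker (Matrix.toLin' M₁ ^ 2 - 1) ≤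
      Submodule.span ℚ {![0, 1, 0, 1], ![1, 0, 1, 0]} := by
  intro v hv
  rw [LinearMap.mem_ker, LinearMap.sub_apply, toLin'_M₁_sq_apply, Module.End.one_apply,
    sub_eq_zero] at hv
  have h0 : v 2 = v 0 := congrFun hv 0
  have h1 : v 3 = v 1 := congrFun hv 1
  refine Submodule.mem_span_pair.mpr ⟨v 1, v 0, ?_⟩
  ext i; fin_cases i <;> simp [h0, h1]

lemma ker_toLin'_M₁_sq_add_one_le :
    LinearMap.ker (Matrix.toLin' M₁ ^ 2 + 1) ≤
      Submodule.span ℚ {![0, -1, 0, 1], ![1, 0, -1, 0]} := by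
  intro v hv
  rw [LinearMap.mem_ker, LinearMap.add_apply, toLin'_M₁_sq_apply, Module.End.one_apply,
    add_eq_zero_iff_eq_neg] at hv
  have h0 : v 2 = -v 0 := congrFun hv 0
  have h1 : v 3 = -v 1 := congrFun hv 1
  refine Submodule.mem_span_pair.mpr ⟨-v 1, v 0, ?_⟩
  ext i; fin_cases i <;> simp [h0, h1]

/-- Every 2-dimensional `ℚ`-subspace of `ℚ⁴` invariant under `M₁` equals
either `span{(0,1,0,1), (1,0,1,0)}` or `span{(0,−1,0,1), (1,0,−1,0)}`. -/
theorem invariant_planes_of_M₁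
    (W : Submodule ℚ (Fin 4 → ℚ))
    (hdim : Module.finrank ℚ W = 2)
    (hinv : ∀ v ∈ W, M₁.mulVec v ∈ W) :
    W = Submodule.span ℚ {![0, 1, 0, 1], ![1, 0, 1, 0]} ∨
    W = Submodule.span ℚ {![0, -1, 0, 1], ![1, 0, -1, 0]} := by
  have hℚ : ¬IsSquare (-1 : ℚ) := fun h => by linarith [h.nonneg]
  rcases Module.End.le_ker_sq_sub_one_or_le_ker_sq_add_one _ hℚ toLin'_M₁_pow_four hinv hdim
    with hW | hW
  · exact .inl (Submodule.eq_span_pair_of_le hdim (hW.trans ker_toLin'_M₁_sq_sub_one_le))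
  · exact .inr (Submodule.eq_span_pair_of_le hdim (hW.trans ker_toLin'_M₁_sq_add_one_le))
end

section
/- Let P₀ be the permutation matrix with rows (0,1,0,0), (1,0,0,0), (0,0,0,1), (0,0,1,0) and let P₄ be the signed permutation matrix with rows (0,0,0,−1), (0,0,−1,0), (0,1,0,0), (1,0,0,0), both acting on ℚ⁴. Then every 2-dimensional ℚ-vector subspace of ℚ⁴ invariant under both P₀ and P₄ is equal either to span{(0,0,1,1), (1,1,0,0)} or to span{(0,0,−1,1), (−1,1,0,0)}. -/
/-- The permutation matrix `P₀` with rows `(0,1,0,0), (1,0,0,0), (0,0,0,1), (0,0,1,0)`. -/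
def P₀ : Matrix (Fin 4) (Fin 4) ℚ :=
  !![0, 1, 0, 0; 1, 0, 0, 0; 0, 0, 0, 1; 0, 0, 1, 0]

/-- The signed permutation matrix `P₄` with rows `(0,0,0,−1), (0,0,−1,0), (0,1,0,0), (1,0,0,0)`. -/
def P₄ : Matrix (Fin 4) (Fin 4) ℚ :=
  !![0, 0, 0, -1; 0, 0, -1, 0; 0, 1, 0, 0; 1, 0, 0, 0]

lemma P0_mulVec (v : Fin 4 → ℚ) : P₀.mulVec v = ![v 1, v 0, v 3, v 2] := by
  funext i; fin_cases i <;> simp [P₀, Matrix.mulVec, dotProduct, Fin.sum_univ_four]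

lemma P4_mulVec (v : Fin 4 → ℚ) : P₄.mulVec v = ![-v 3, -v 2, v 1, v 0] := by
  funext i; fin_cases i <;> simp [P₄, Matrix.mulVec, dotProduct, Fin.sum_univ_four]

/-- From a nonzero (-1)-eigenvector of P₀ in W, get both generators of E₋ in W. -/
lemma neg_gen (W : Submodule ℚ (Fin 4 → ℚ)) (hinv₄ : ∀ v ∈ W, P₄.mulVec v ∈ W)
    (a b : ℚ) (hxW : ![-a, a, -b, b] ∈ W) (hne : ¬ (a = 0 ∧ b = 0)) :
    ![(-1 : ℚ), 1, 0, 0] ∈ W ∧ ![(0 : ℚ), 0, -1, 1] ∈ W := by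
  have hc : a ^ 2 + b ^ 2 ≠ 0 := by
    intro h
    exact hne ⟨by nlinarith [sq_nonneg a, sq_nonneg b], by nlinarith [sq_nonneg a, sq_nonneg b]⟩
  have hPx : P₄.mulVec ![-a, a, -b, b] ∈ W := hinv₄ _ hxW
  rw [P4_mulVec] at hPx
  simp only [Matrix.cons_val_zero, Matrix.cons_val_one, Matrix.head_cons,
    Matrix.cons_val_two, Matrix.cons_val_three, Matrix.tail_cons, neg_neg] at hPx
  constructor
  · have h1 : ![(-1 : ℚ), 1, 0, 0]
        = (a ^ 2 + b ^ 2)⁻¹ • (a • ![-a, a, -b, b] + b • ![-b, b, a, -a]) := by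
      funext i; fin_cases i <;> (try simp) <;> (try field_simp) <;> (try ring) <;> (try tauto)
    rw [h1]
    exact W.smul_mem _ (W.add_mem (W.smul_mem _ hxW) (W.smul_mem _ hPx))
  · have h1 : ![(0 : ℚ), 0, -1, 1]
        = (a ^ 2 + b ^ 2)⁻¹ • (b • ![-a, a, -b, b] - a • ![-b, b, a, -a]) := by
      funext i; fin_cases i <;> (try simp) <;> (try field_simp) <;> (try ring) <;> (try tauto)
    rw [h1]
    exact W.smul_mem _ (W.sub_mem (W.smul_mem _ hxW) (W.smul_mem _ hPx))

/-- From a nonzero (+1)-eigenvector of P₀ in W, get both generators of E₊ in W. -/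
lemma pos_gen (W : Submodule ℚ (Fin 4 → ℚ)) (hinv₄ : ∀ v ∈ W, P₄.mulVec v ∈ W)
    (a b : ℚ) (hyW : ![a, a, b, b] ∈ W) (hne : ¬ (a = 0 ∧ b = 0)) :
    ![(1 : ℚ), 1, 0, 0] ∈ W ∧ ![(0 : ℚ), 0, 1, 1] ∈ W := by
  have hc : a ^ 2 + b ^ 2 ≠ 0 := by
    intro h
    exact hne ⟨by nlinarith [sq_nonneg a, sq_nonneg b], by nlinarith [sq_nonneg a, sq_nonneg b]⟩
  have hPy : P₄.mulVec ![a, a, b, b] ∈ W := hinv₄ _ hyW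
  rw [P4_mulVec] at hPy
  simp only [Matrix.cons_val_zero, Matrix.cons_val_one, Matrix.head_cons,
    Matrix.cons_val_two, Matrix.cons_val_three, Matrix.tail_cons] at hPy
  constructor
  · have h1 : ![(1 : ℚ), 1, 0, 0]
        = (a ^ 2 + b ^ 2)⁻¹ • (a • ![a, a, b, b] - b • ![-b, -b, a, a]) := by
      funext i; fin_cases i <;> (try simp) <;> (try field_simp) <;> (try ring) <;> (try tauto)
    rw [h1]
    exact W.smul_mem _ (W.sub_mem (W.smul_mem _ hyW) (W.smul_mem _ hPy))
  · have h1 : ![(0 : ℚ), 0, 1, 1]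
        = (a ^ 2 + b ^ 2)⁻¹ • (b • ![a, a, b, b] + a • ![-b, -b, a, a]) := by
      funext i; fin_cases i <;> (try simp) <;> (try field_simp) <;> (try ring) <;> (try tauto)
    rw [h1]
    exact W.smul_mem _ (W.add_mem (W.smul_mem _ hyW) (W.smul_mem _ hPy))

lemma span_pair_finrank_le (a b : Fin 4 → ℚ) :
    Module.finrank ℚ (Submodule.span ℚ {a, b}) ≤ 2 := by
  classical
  refine (finrank_span_le_card _).trans ?_
  simpa using Finset.card_insert_le a {b}


/-- Every 2-dimensional `ℚ`-subspace of `ℚ⁴` invariant under both `P₀`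
and `P₄` equals either `span{(0,0,1,1), (1,1,0,0)}` or `span{(0,0,−1,1), (−1,1,0,0)}`. -/
theorem invariant_planes_of_P₀_P₄
    (W : Submodule ℚ (Fin 4 → ℚ))
    (hdim : Module.finrank ℚ W = 2)
    (hinv₀ : ∀ v ∈ W, P₀.mulVec v ∈ W)
    (hinv₄ : ∀ v ∈ W, P₄.mulVec v ∈ W) :
    W = Submodule.span ℚ {![0, 0, 1, 1], ![1, 1, 0, 0]} ∨
    W = Submodule.span ℚ {![0, 0, -1, 1], ![-1, 1, 0, 0]} := by
  by_cases hp : ∀ w ∈ W, P₀.mulVec w = w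
  · left
    have hle : W ≤ Submodule.span ℚ {![0, 0, 1, 1], ![1, 1, 0, 0]} := by
      intro w hw
      have h := hp w hw
      rw [P0_mulVec] at h
      have h1 : w 1 = w 0 := by simpa using congrFun h 0
      have h3 : w 3 = w 2 := by simpa using congrFun h 2
      rw [Submodule.mem_span_pair]
      refine ⟨w 2, w 0, ?_⟩
      funext i; fin_cases i <;> simp [h1, h3]
    exact Submodule.eq_of_le_of_finrank_le hle
      ((span_pair_finrank_le _ _).trans_eq hdim.symm)
  · push_neg at hp
    obtain ⟨w, hwW, hw⟩ := hp
    have hxW' : w - P₀.mulVec w ∈ W := W.sub_mem hwW (hinv₀ w hwW)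
    have hxeq : w - P₀.mulVec w
        = ![-(w 1 - w 0), w 1 - w 0, -(w 3 - w 2), w 3 - w 2] := by
      rw [P0_mulVec]; funext i; fin_cases i <;> simp <;> try ring
    rw [hxeq] at hxW'
    have hxne : ¬ (w 1 - w 0 = 0 ∧ w 3 - w 2 = 0) := by
      rintro ⟨h1, h3⟩
      apply hw
      rw [P0_mulVec]
      have e1 : w 1 = w 0 := by linarith
      have e3 : w 3 = w 2 := by linarith
      funext i; fin_cases i <;> simp [e1, e3]
    obtain ⟨hm1, hm2⟩ := neg_gen W hinv₄ _ _ hxW' hxne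
    by_cases hq : ∀ w ∈ W, P₀.mulVec w = -w
    · right
      have hle : W ≤ Submodule.span ℚ {![0, 0, -1, 1], ![-1, 1, 0, 0]} := by
        intro v hv
        have h := hq v hv
        rw [P0_mulVec] at h
        have h1 : v 1 = -v 0 := by simpa using congrFun h 0
        have h3 : v 3 = -v 2 := by simpa using congrFun h 2
        rw [Submodule.mem_span_pair]
        refine ⟨v 3, v 1, ?_⟩
        funext i; fin_cases i <;> simp [h1, h3] <;> ring
      exact Submodule.eq_of_le_of_finrank_le hle
        ((span_pair_finrank_le _ _).trans_eq hdim.symm)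
    · exfalso
      push_neg at hq
      obtain ⟨u, huW, hu⟩ := hq
      have hyW' : u + P₀.mulVec u ∈ W := W.add_mem huW (hinv₀ u huW)
      have hyeq : u + P₀.mulVec u
          = ![u 0 + u 1, u 0 + u 1, u 2 + u 3, u 2 + u 3] := by
        rw [P0_mulVec]; funext i; fin_cases i <;> simp <;> try ring
      rw [hyeq] at hyW'
      have hyne : ¬ (u 0 + u 1 = 0 ∧ u 2 + u 3 = 0) := by
        rintro ⟨h1, h3⟩
        apply hu
        rw [P0_mulVec]
        funext i; fin_cases i <;> simp <;> try linarith
      obtain ⟨hp1, hp2⟩ := pos_gen W hinv₄ _ _ hyW' hyne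
      have htop : W = ⊤ := by
        rw [eq_top_iff]
        intro v _
        have hv : v = ((v 0 + v 1) / 2) • ![(1:ℚ),1,0,0] + ((v 1 - v 0) / 2) • ![(-1:ℚ),1,0,0]
            + ((v 2 + v 3) / 2) • ![(0:ℚ),0,1,1] + ((v 3 - v 2) / 2) • ![(0:ℚ),0,-1,1] := by
          funext i; fin_cases i <;> simp <;> try ring
        rw [hv]
        exact W.add_mem (W.add_mem (W.add_mem (W.smul_mem _ hp1) (W.smul_mem _ hm1))
          (W.smul_mem _ hp2)) (W.smul_mem _ hm2)
      rw [htop, finrank_top] at hdim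
      simp [Module.finrank_fin_fun] at hdim
end

section
/- Let x₀, x₁, x₂, x₃ ∈ ℂ satisfy x₀·conj(x₃) + |x₁|² + |x₂|² + x₃·conj(x₀) < 0 (note the left side is real). Then for every (y₀, y₁, y₂, y₃) ∈ ℂ⁴ with (y₀, y₁, y₂, y₃) ≠ (0,0,0,0) and x₀y₃ − x₁y₂ − x₂y₁ + x₃y₀ = 0, one has y₀·conj(y₃) + |y₁|² + |y₂|² + y₃·conj(y₀) > 0. -/
open ComplexConjugate

lemma antiWeil_cs (p q r s t u : ℂ) :
    Complex.normSq (2*p*s + 2*q*t + r*u) ≤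
      (2*Complex.normSq p + 2*Complex.normSq q + Complex.normSq r) *
      (2*Complex.normSq s + 2*Complex.normSq t + Complex.normSq u) := by
  have key : (2*Complex.normSq p + 2*Complex.normSq q + Complex.normSq r) *
      (2*Complex.normSq s + 2*Complex.normSq t + Complex.normSq u)
      - Complex.normSq (2*p*s + 2*q*t + r*u)
      = 4*Complex.normSq (p*conj t - q*conj s) + 2*Complex.normSq (p*conj u - r*conj s)
        + 2*Complex.normSq (q*conj u - r*conj t) := by
    simp [Complex.normSq_apply, Complex.mul_re, Complex.mul_im, Complex.sub_re,
      Complex.sub_im, Complex.conj_re, Complex.conj_im]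
    ring
  nlinarith [Complex.normSq_nonneg (p*conj t - q*conj s),
    Complex.normSq_nonneg (p*conj u - r*conj s), Complex.normSq_nonneg (q*conj u - r*conj t)]

lemma antiWeil_re_eq (w₀ w₁ w₂ w₃ : ℂ) :
    2 * (w₀ * conj w₃ + w₁ * conj w₁ + w₂ * conj w₂ + w₃ * conj w₀).re
      = Complex.normSq (w₀ + w₃) - Complex.normSq (w₀ - w₃)
        + 2 * Complex.normSq w₁ + 2 * Complex.normSq w₂ := by
  simp [Complex.normSq_apply, Complex.mul_re, Complex.add_re, Complex.add_im,
    Complex.sub_re, Complex.sub_im]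
  ring

/-- If `x₀, x₁, x₂, x₃ ∈ ℂ` satisfy
`x₀·conj x₃ + |x₁|² + |x₂|² + x₃·conj x₀ < 0` (this expression is real), then for every
`(y₀,y₁,y₂,y₃) ≠ (0,0,0,0)` with `x₀y₃ − x₁y₂ − x₂y₁ + x₃y₀ = 0` one has
`y₀·conj y₃ + |y₁|² + |y₂|² + y₃·conj y₀ > 0`. -/
theorem antiWeil_positivity
    (x₀ x₁ x₂ x₃ : ℂ)
    (hx : (x₀ * conj x₃ + x₁ * conj x₁ + x₂ * conj x₂ + x₃ * conj x₀).re < 0) :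
    ∀ y₀ y₁ y₂ y₃ : ℂ, ¬ (y₀ = 0 ∧ y₁ = 0 ∧ y₂ = 0 ∧ y₃ = 0) →
      x₀ * y₃ - x₁ * y₂ - x₂ * y₁ + x₃ * y₀ = 0 →
      0 < (y₀ * conj y₃ + y₁ * conj y₁ + y₂ * conj y₂ + y₃ * conj y₀).re := by
  intro y₀ y₁ y₂ y₃ hy h0
  set a := x₀ + x₃ with ha
  set b := x₀ - x₃ with hb
  set c := y₀ + y₃ with hc
  set d := y₀ - y₃ with hd
  -- the constraint in light-cone coordinates
  have hbd : b * d = -(2*x₁*y₂ + 2*x₂*y₁ + a*(-c)) := by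
    rw [hb, hd, ha, hc]
    linear_combination (-2 : ℂ) * h0
  -- Cauchy–Schwarz
  have hCS : Complex.normSq b * Complex.normSq d ≤
      (2*Complex.normSq x₁ + 2*Complex.normSq x₂ + Complex.normSq a) *
      (2*Complex.normSq y₂ + 2*Complex.normSq y₁ + Complex.normSq (-c)) := by
    rw [← Complex.normSq_mul, hbd, Complex.normSq_neg]
    exact antiWeil_cs x₁ x₂ a y₂ y₁ (-c)
  rw [Complex.normSq_neg] at hCS
  have hxre := antiWeil_re_eq x₀ x₁ x₂ x₃
  have hyre := antiWeil_re_eq y₀ y₁ y₂ y₃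
  rw [← ha, ← hb] at hxre
  rw [← hc, ← hd] at hyre
  -- real abbreviations
  set A := 2*Complex.normSq x₁ + 2*Complex.normSq x₂ + Complex.normSq a with hA
  set B := Complex.normSq b with hB
  set C := 2*Complex.normSq y₂ + 2*Complex.normSq y₁ + Complex.normSq c with hC
  set D := Complex.normSq d with hD
  have hAB : A < B := by nlinarith [hx, hxre]
  have hA0 : 0 ≤ A := by
    have := Complex.normSq_nonneg x₁
    have := Complex.normSq_nonneg x₂
    have := Complex.normSq_nonneg a
    rw [hA]; linarith
  have hB0 : 0 < B := lt_of_le_of_lt hA0 hAB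
  have hD0 : 0 ≤ D := Complex.normSq_nonneg d
  have hC0 : 0 ≤ C := by
    have := Complex.normSq_nonneg y₁
    have := Complex.normSq_nonneg y₂
    have := Complex.normSq_nonneg c
    rw [hC]; linarith
  -- C cannot be zero
  have hCpos : 0 < C := by
    rcases lt_or_eq_of_le hC0 with h | h
    · exact h
    have hy1 : Complex.normSq y₁ = 0 := by
      have := Complex.normSq_nonneg y₁
      have := Complex.normSq_nonneg y₂
      have := Complex.normSq_nonneg c
      rw [hC] at h; linarith
    have hy2 : Complex.normSq y₂ = 0 := by
      have := Complex.normSq_nonneg y₁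
      have := Complex.normSq_nonneg y₂
      have := Complex.normSq_nonneg c
      rw [hC] at h; linarith
    have hcz : Complex.normSq c = 0 := by
      have := Complex.normSq_nonneg y₁
      have := Complex.normSq_nonneg y₂
      have := Complex.normSq_nonneg c
      rw [hC] at h; linarith
    have hDz : D = 0 := by
      nlinarith [hCS, hB0, hD0]
    have hc' : c = 0 := Complex.normSq_eq_zero.mp hcz
    have hd' : d = 0 := Complex.normSq_eq_zero.mp hDz
    have hy1' : y₁ = 0 := Complex.normSq_eq_zero.mp hy1
    have hy2' : y₂ = 0 := Complex.normSq_eq_zero.mp hy2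
    have hy0 : y₀ = 0 := by
      have : (2:ℂ) * y₀ = c + d := by rw [hc, hd]; ring
      have h2 : c + d = 0 := by rw [hc', hd']; ring
      rw [h2] at this
      simpa using this
    have hy3 : y₃ = 0 := by
      have : (2:ℂ) * y₃ = c - d := by rw [hc, hd]; ring
      have h2 : c - d = 0 := by rw [hc', hd']; ring
      rw [h2] at this
      have := mul_eq_zero.mp this
      simpa using this
    exact absurd ⟨hy0, hy1', hy2', hy3⟩ hy
  -- conclude D < C
  have hDC : D < C := by
    rcases lt_or_eq_of_le hD0 with h | h
    · nlinarith [hCS]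
    · rw [← h]; exact hCpos
  linarith [hyre, hDC]
end
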